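/- arXiv:math/0403043 — 3 statements merged into one kernel-verified Lean document; each statement's English description precedes it below -/
import Mathlib

section
/- There exists a constant c₁ > 0 such that for every monic polynomial P ∈ ℂ[X] and every compact set B ⊆ ℂ with Lebesgue measure μ(B) ≥ c₁, one has ∫_B log|P(z)| dμ(z) ≥ deg P. -/
/-!
Off the roots of the monic polynomial `P`, `log ‖P z‖ = ∑ log ‖z - a‖` over its roots `a`,
so it suffices that `∫_B log ‖z - a‖ ≥ 1` for every `a`. Split `log = log⁺ - log⁺ (·)⁻¹`.
The negative part `log⁺ ‖z - a‖⁻¹` is `O(‖z - a‖ ^ (-1/2))` and vanishes off the unit ball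
around `a`, hence is integrable on the whole space, with an integral `K` independent of `a`.
The positive part is at least `1` outside the ball of radius `e` around `a`, which leaves a
part of `B` of measure at least `μ B - μ (ball 0 e)`. Hence `c₁ = μ (ball 0 e) + K + 1` works.
-/

open MeasureTheory Metric Real

theorem Real.posLog_le_rpow_div {x ε : ℝ} (hx : 0 ≤ x) (hε : 0 < ε) : log⁺ x ≤ x ^ ε / ε :=
  max_le (by positivity) (log_le_rpow_div hx hε)

theorem MeasureTheory.integral_multiset_sum_map {α ι : Type*} [MeasurableSpace α] {μ : Measure α}
    {s : Multiset ι} {f : ι → α → ℝ} (hf : ∀ i ∈ s, Integrable (f i) μ) :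
    ∫ x, (s.map fun i => f i x).sum ∂μ = (s.map fun i => ∫ x, f i x ∂μ).sum := by
  classical
  simp_rw [Finset.sum_multiset_map_count, nsmul_eq_mul]
  rw [integral_finsetSum _ fun i hi => (hf i (Multiset.mem_toFinset.1 hi)).const_mul _]
  simp_rw [integral_const_mul]

section LogNorm

variable {E : Type*} [NormedAddCommGroup E] [NormedSpace ℝ E] [FiniteDimensional ℝ E]
  [MeasurableSpace E] [BorelSpace E] (μ : Measure E) [μ.IsAddHaarMeasure]

theorem integrable_posLog_norm_inv [Nontrivial E] : Integrable (fun x : E => log⁺ ‖x‖⁻¹) μ := by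
  have hdim : 1 ≤ Module.finrank ℝ E := Module.finrank_pos
  have hα : (1 / 2 : ℝ) < Module.finrank ℝ E := by linarith [(Nat.one_le_cast (α := ℝ)).2 hdim]
  have hbound : ∀ x : E, ‖log⁺ ‖x‖⁻¹‖ ≤ 2 * ‖x‖ ^ (-(1 / 2 : ℝ)) := fun x => by
    rw [norm_of_nonneg posLog_nonneg, rpow_neg (norm_nonneg x), ← inv_rpow (norm_nonneg x)]
    linarith [posLog_le_rpow_div (inv_nonneg.2 (norm_nonneg x)) (one_half_pos (α := ℝ))]
  refine (integrableOn_ball_of_norm_le_rpow (r := 1) hdim hα (ae_of_all _ hbound)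
    (by fun_prop)).integrable_of_forall_notMem_eq_zero fun x hx => ?_
  rw [posLog_eq_zero_iff, abs_inv, abs_norm]
  exact inv_le_one_of_one_le₀ (by simpa using hx)

theorem locallyIntegrable_log_norm_sub [Nontrivial E] (a : E) :
    LocallyIntegrable (fun x => log ‖x - a‖) μ := by
  simp_rw [← posLog_sub_posLog_inv]
  exact (Continuous.locallyIntegrable (by fun_prop)).sub
    ((integrable_posLog_norm_inv μ).comp_sub_right a).locallyIntegrable

theorem measureReal_sub_le_setIntegral_log_norm_sub [Nontrivial E] {B : Set E}
    (hB : IsCompact B) (a : E) :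
    μ.real B - μ.real (ball 0 (exp 1)) - ∫ x, log⁺ ‖x‖⁻¹ ∂μ ≤ ∫ x in B, log ‖x - a‖ ∂μ := by
  have hpos : IntegrableOn (fun x => log⁺ ‖x - a‖) B μ :=
    (Continuous.continuousOn (by fun_prop)).integrableOn_compact hB
  have hneg : Integrable (fun x => log⁺ ‖x - a‖⁻¹) μ :=
    (integrable_posLog_norm_inv μ).comp_sub_right a
  have hsplit : ∫ x in B, log ‖x - a‖ ∂μ =
      ∫ x in B, log⁺ ‖x - a‖ ∂μ - ∫ x in B, log⁺ ‖x - a‖⁻¹ ∂μ := by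
    simp_rw [← posLog_sub_posLog_inv]
    exact integral_sub hpos hneg.integrableOn
  have hneg_le : ∫ x in B, log⁺ ‖x - a‖⁻¹ ∂μ ≤ ∫ x, log⁺ ‖x‖⁻¹ ∂μ :=
    (setIntegral_le_integral hneg (ae_of_all _ fun _ => posLog_nonneg)).trans_eq
      (integral_sub_right_eq_self (fun x => log⁺ ‖x‖⁻¹) a)
  have hpos_ge : μ.real B - μ.real (ball 0 (exp 1)) ≤ ∫ x in B, log⁺ ‖x - a‖ ∂μ :=
    calc μ.real B - μ.real (ball 0 (exp 1)) = μ.real B - μ.real (ball a (exp 1)) := by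
          simp only [Measure.real, Measure.addHaar_ball_center]
      _ ≤ μ.real (B \ ball a (exp 1)) := le_measureReal_sdiff measure_ball_lt_top.ne
      _ = ∫ x in B \ ball a (exp 1), 1 ∂μ := by simp
      _ ≤ ∫ x in B \ ball a (exp 1), log⁺ ‖x - a‖ ∂μ := by
          refine setIntegral_mono_on (integrableOn_const (measure_ne_top_of_subset
            Set.sdiff_subset hB.measure_lt_top.ne)) (hpos.mono_set Set.sdiff_subset)
            (hB.measurableSet.diff measurableSet_ball) fun x hx => ?_
          have he : exp 1 ≤ ‖x - a‖ := by simpa [dist_eq_norm] using hx.2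
          calc (1 : ℝ) = log (exp 1) := (log_exp 1).symm
            _ ≤ log ‖x - a‖ := log_le_log (exp_pos 1) he
            _ ≤ log⁺ ‖x - a‖ := le_max_right _ _
      _ ≤ ∫ x in B, log⁺ ‖x - a‖ ∂μ :=
          setIntegral_mono_set hpos (ae_of_all _ fun _ => posLog_nonneg)
            Set.sdiff_subset.eventuallyLE
  linarith

end LogNorm

namespace Polynomial

variable {K : Type*} [NormedField K] {P : K[X]}

theorem log_norm_eval_eq_sum_roots (hs : P.Splits) (hm : P.Monic) {z : K} (hz : P.eval z ≠ 0) :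
    log ‖P.eval z‖ = (P.roots.map fun a => log ‖z - a‖).sum := by
  rw [hs.eval_eq_prod_roots_of_monic hm] at hz ⊢
  rw [← normHom_apply, map_multiset_prod, Multiset.map_map, log_multiset_prod]
  · simp only [Multiset.map_map, Function.comp_def, normHom_apply]
  · intro x hx
    obtain ⟨a, ha, rfl⟩ := Multiset.mem_map.1 hx
    exact norm_ne_zero_iff.2 fun hza =>
      hz (Multiset.prod_eq_zero (Multiset.mem_map.2 ⟨a, ha, hza⟩))

theorem integral_log_norm_eval_eq_sum_roots [MeasurableSpace K] {μ : Measure K}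
    [NullSingletonClass μ] (hs : P.Splits) (hm : P.Monic)
    (hint : ∀ a ∈ P.roots, Integrable (fun z => log ‖z - a‖) μ) :
    ∫ z, log ‖P.eval z‖ ∂μ = (P.roots.map fun a => ∫ z, log ‖z - a‖ ∂μ).sum := by
  have hroots : ∀ᵐ z ∂μ, P.eval z ≠ 0 :=
    measure_eq_zero_iff_ae_notMem.1 ((finite_setOfPred_isRoot hm.ne_zero).measure_zero μ)
  rw [integral_congr_ae (hroots.mono fun z => log_norm_eval_eq_sum_roots hs hm)]
  exact integral_multiset_sum_map hint

end Polynomial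

/-- There is a constant `c₁ > 0` such that for every monic polynomial `P ∈ ℂ[X]` and every
compact set `B ⊆ ℂ` of Lebesgue measure at least `c₁`, the integral of `log |P(z)|` over `B`
is at least `deg P`. -/
theorem stmt_10 :
    ∃ c₁ : ℝ, 0 < c₁ ∧ ∀ P : Polynomial ℂ, P.Monic →
      ∀ B : Set ℂ, IsCompact B → ENNReal.ofReal c₁ ≤ MeasureTheory.volume B →
        (P.natDegree : ℝ) ≤ ∫ z in B, Real.log ‖P.eval z‖ := by
  refine ⟨volume.real (ball (0 : ℂ) (exp 1)) + (∫ z : ℂ, log⁺ ‖z‖⁻¹) + 1,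
    add_pos_of_nonneg_of_pos (add_nonneg measureReal_nonneg
      (integral_nonneg fun _ => posLog_nonneg)) one_pos, ?_⟩
  intro P hP B hB hvol
  have hroot (a : ℂ) : 1 ≤ ∫ z in B, log ‖z - a‖ := by
    have hB_large := (ENNReal.ofReal_le_iff_le_toReal hB.measure_lt_top.ne).1 hvol
    linarith [measureReal_sub_le_setIntegral_log_norm_sub volume hB a, measureReal_def volume B]
  have hsplits := IsAlgClosed.splits P
  rw [Polynomial.integral_log_norm_eval_eq_sum_roots hsplits hP fun a _ =>
    (locallyIntegrable_log_norm_sub volume a).integrableOn_isCompact hB]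
  calc (P.natDegree : ℝ) = (P.roots.map fun _ => (1 : ℝ)).sum := by
        simp [hsplits.natDegree_eq_card_roots]
    _ ≤ _ := Multiset.sum_map_le_sum_map _ _ fun a _ => hroot a
end

section
/- Let (P_n)_{n∈ℕ} be a sequence of monic polynomials in ℂ[X] whose degrees tend to infinity, and let ξ₁, …, ξ_m ∈ ℂ. Then there exists ξ ∈ ℂ, transcendental over the subfield ℚ(ξ₁, …, ξ_m), such that the sequence (|P_n(ξ)|)_n is unbounded in ℝ. -/
/-!
For real `x` and bounded measurable `E ⊆ ℝ` we have `∫_E log |t - x| ≥ |E| - 8`: the integrand is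
`≥ 1` outside `(x - 3, x + 3)`, `≥ 0` outside `[x - 1, x + 1]`, and the logarithmic singularity
costs at most `∫_{-1}^{1} log |s| ds = -2`. As `|t - r| ≥ |t - Re r|`, summing over the roots of a
monic `Q` of degree `d` with `‖Q‖ ≤ M` on `E` gives `d (|E| - 8) ≤ |E| log M`. Since the degrees
tend to infinity, the points of `[0, 9]` at which `(P n)` stays bounded by `M` form a set of
measure `≤ 8`, and so does their union over `M`. The reals algebraic over the countable field
`ℚ(ξ₁, …, ξ_m)` are countable, so some `t ∈ [0, 9]` avoids both.
-/

open MeasureTheory Set Real Polynomial Filter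

lemma integrableOn_log_abs_sub (x a b : ℝ) :
    IntegrableOn (fun t => log |t - x|) (Icc a b) := by
  have h : IntervalIntegrable (fun t => log (t - x)) volume a b := by
    simpa using
      (intervalIntegral.intervalIntegrable_log' (a := a - x) (b := b - x)).comp_sub_right x
  rw [intervalIntegrable_iff'] at h
  simpa only [log_abs] using h.mono_set Icc_subset_uIcc

lemma integral_log_abs_sub_Icc (x : ℝ) : ∫ t in Icc (x - 1) (x + 1), log |t - x| = -2 := by
  rw [integral_Icc_eq_integral_Ioc, ← intervalIntegral.integral_of_le (by linarith)]
  simp only [log_abs]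
  rw [intervalIntegral.integral_comp_sub_right (fun t => log t), integral_log]
  norm_num

lemma measureReal_sub_eight_le_setIntegral_log_abs_sub {E : Set ℝ} {a b : ℝ}
    (hE : MeasurableSet E) (hEab : E ⊆ Icc a b) (x : ℝ) :
    volume.real E - 8 ≤ ∫ t in E, log |t - x| := by
  set I := Icc (x - 1) (x + 1)
  set J := Ioo (x - 3) (x + 3)
  have hint : IntegrableOn (fun t => log |t - x|) (E ∪ I) :=
    (integrableOn_log_abs_sub x (min a (x - 1)) (max b (x + 1))).mono_set <|
      union_subset (hEab.trans (Icc_subset_Icc (min_le_left _ _) (le_max_left _ _)))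
        (Icc_subset_Icc (min_le_right _ _) (le_max_right _ _))
  have hE_fin : volume E ≠ ⊤ := ((measure_mono hEab).trans_lt measure_Icc_lt_top).ne
  have h_near : -2 ≤ ∫ t in E ∩ I, log |t - x| := by
    have h_rest : ∫ t in I \ E, log |t - x| ≤ 0 := by
      refine setIntegral_nonpos (measurableSet_Icc.diff hE) fun t ht => ?_
      refine log_nonpos (abs_nonneg _) (abs_le.2 ⟨?_, ?_⟩) <;> linarith [ht.1.1, ht.1.2]
    rw [← integral_log_abs_sub_Icc x,
      ← integral_inter_add_sdiff hE (hint.mono_set subset_union_right), inter_comm]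
    linarith
  have h_far : volume.real E - 6 ≤ ∫ t in E \ I, log |t - x| := by
    have h_log_ge_one : ∀ t ∈ E \ J, 1 ≤ log |t - x| := by
      intro t ht
      have h3 : 3 ≤ |t - x| := by
        by_contra! h
        exact ht.2 ⟨by linarith [neg_abs_le (t - x)], by linarith [le_abs_self (t - x)]⟩
      rw [le_log_iff_exp_le (by linarith)]
      linarith [exp_one_lt_d9]
    have h_far_nonneg : ∀ t ∈ E \ I, 0 ≤ log |t - x| := by
      intro t ht
      refine log_nonneg ?_
      by_contra! h
      exact ht.2 ⟨by linarith [neg_abs_le (t - x)], by linarith [le_abs_self (t - x)]⟩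
    calc volume.real E - 6 ≤ volume.real (E \ J) := by
          have := le_measureReal_sdiff (μ := volume) (s₁ := E) (s₂ := J) measure_Ioo_lt_top.ne
          norm_num [J, volume_real_Ioo] at this
          linarith
      _ ≤ ∫ t in E \ J, log |t - x| := by
          simpa using setIntegral_ge_of_const_le_real (hE.diff measurableSet_Ioo)
            (measure_ne_top_of_subset sdiff_subset hE_fin) h_log_ge_one
            (hint.mono_set (sdiff_subset.trans subset_union_left))
      _ ≤ ∫ t in E \ I, log |t - x| := by
          refine setIntegral_mono_set (hint.mono_set (sdiff_subset.trans subset_union_left)) ?_ ?_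
          · exact (ae_restrict_iff' (hE.diff measurableSet_Icc)).2 (.of_forall h_far_nonneg)
          · refine (sdiff_subset_sdiff_right ?_).eventuallyLE
            exact Icc_subset_Ioo (by linarith) (by linarith)
  rw [← integral_inter_add_sdiff measurableSet_Icc (hint.mono_set subset_union_left)]
  linarith

lemma integrableOn_sum_log_abs_sub (s : Multiset ℝ) (a b : ℝ) :
    IntegrableOn (fun t => (s.map fun x => log |t - x|).sum) (Icc a b) := by
  induction s using Multiset.induction_on with
  | empty => simp
  | cons x s ih =>
    simp only [Multiset.map_cons, Multiset.sum_cons]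
    exact (integrableOn_log_abs_sub x a b).add ih

lemma card_mul_le_setIntegral_sum_log_abs_sub {E : Set ℝ} {a b : ℝ} (hE : MeasurableSet E)
    (hEab : E ⊆ Icc a b) (s : Multiset ℝ) :
    s.card * (volume.real E - 8) ≤ ∫ t in E, (s.map fun x => log |t - x|).sum := by
  induction s using Multiset.induction_on with
  | empty => simp
  | cons x s ih =>
    simp only [Multiset.map_cons, Multiset.sum_cons, Multiset.card_cons]
    rw [integral_add ((integrableOn_log_abs_sub x a b).mono_set hEab)
      ((integrableOn_sum_log_abs_sub s a b).mono_set hEab)]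
    push_cast
    linarith [measureReal_sub_eight_le_setIntegral_log_abs_sub hE hEab x]

lemma sum_log_abs_sub_eq_log_prod {s : Multiset ℝ} {t : ℝ} (ht : t ∉ s) :
    (s.map fun x => log |t - x|).sum = log (s.map fun x => |t - x|).prod := by
  rw [log_multiset_prod, Multiset.map_map]
  · rfl
  · simp only [Multiset.mem_map, forall_exists_index, and_imp, forall_apply_eq_imp_iff₂]
    exact fun x hx => abs_ne_zero.2 (sub_ne_zero.2 (ne_of_mem_of_not_mem hx ht).symm)

lemma prod_abs_sub_re_le_norm_eval {Q : ℂ[X]} (hQ : Q.Monic) (t : ℝ) :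
    ((Q.roots.map Complex.re).map fun x => |t - x|).prod ≤ ‖Q.eval (t : ℂ)‖ := by
  rw [(IsAlgClosed.splits Q).eval_eq_prod_roots_of_monic hQ, ← normHom_apply,
    map_multiset_prod, Multiset.map_map, Multiset.map_map]
  refine Multiset.prod_map_le_prod_map₀ _ _ (fun _ _ => abs_nonneg _) fun r _ => ?_
  simpa using Complex.abs_re_le_norm ((t : ℂ) - r)

lemma natDegree_mul_le_of_norm_eval_le {Q : ℂ[X]} (hQ : Q.Monic) {E : Set ℝ} {a b : ℝ}
    (hE : MeasurableSet E) (hEab : E ⊆ Icc a b) {M : ℝ} (hM : ∀ t ∈ E, ‖Q.eval (t : ℂ)‖ ≤ M) :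
    Q.natDegree * (volume.real E - 8) ≤ volume.real E * log M := by
  set s := Q.roots.map Complex.re
  have h_ae : ∀ᵐ t, t ∈ E → (s.map fun x => log |t - x|).sum ≤ log M := by
    filter_upwards [s.toFinset.countable_toSet.ae_notMem volume] with t hts htE
    replace hts : t ∉ s := by simpa using hts
    rw [sum_log_abs_sub_eq_log_prod hts]
    refine log_le_log (Multiset.prod_pos fun y hy => ?_)
      ((prod_abs_sub_re_le_norm_eval hQ t).trans (hM t htE))
    obtain ⟨x, hx, rfl⟩ := Multiset.mem_map.1 hy
    exact abs_pos.2 (sub_ne_zero.2 (ne_of_mem_of_not_mem hx hts).symm)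
  have hE_fin : volume E ≠ ⊤ := ((measure_mono hEab).trans_lt measure_Icc_lt_top).ne
  calc (Q.natDegree : ℝ) * (volume.real E - 8) = s.card * (volume.real E - 8) := by
        simp [s, IsAlgClosed.card_roots_eq_natDegree]
    _ ≤ ∫ t in E, (s.map fun x => log |t - x|).sum :=
        card_mul_le_setIntegral_sum_log_abs_sub hE hEab s
    _ ≤ ∫ _ in E, log M :=
        setIntegral_mono_on_ae ((integrableOn_sum_log_abs_sub s a b).mono_set hEab)
          (integrableOn_const hE_fin) hE h_ae
    _ = volume.real E * log M := by rw [setIntegral_const, smul_eq_mul]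

lemma IntermediateField.countable_adjoin (F : Type*) [Field F] [Countable F] {L : Type*} [Field L]
    [Algebra F L] {S : Set L} (hS : S.Countable) : Countable (IntermediateField.adjoin F S) := by
  rw [← Cardinal.mk_le_aleph0_iff, ← Cardinal.lift_le_aleph0]
  refine (IntermediateField.lift_cardinalMk_adjoin_le F S).trans ?_
  simp [Cardinal.mk_le_aleph0, hS.le_aleph0]

lemma measureReal_le_eight_of_forall_norm_eval_le {P : ℕ → ℂ[X]} (hmonic : ∀ n, (P n).Monic)
    (hdeg : Tendsto (fun n => (P n).natDegree) atTop atTop) {E : Set ℝ} {a b : ℝ}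
    (hE : MeasurableSet E) (hEab : E ⊆ Icc a b) {M : ℝ}
    (hM : ∀ n, ∀ t ∈ E, ‖(P n).eval (t : ℂ)‖ ≤ M) : volume.real E ≤ 8 := by
  by_contra! h8
  obtain ⟨n, hn⟩ :=
    (hdeg.eventually_gt_atTop ⌈volume.real E * log M / (volume.real E - 8)⌉₊).exists
  have h_deg_le := natDegree_mul_le_of_norm_eval_le (hmonic n) hE hEab (hM n)
  rw [← le_div_iff₀ (by linarith)] at h_deg_le
  linarith [Nat.lt_of_ceil_lt hn]

lemma volume_iUnion_bounded_le_eight {P : ℕ → ℂ[X]} (hmonic : ∀ n, (P n).Monic)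
    (hdeg : Tendsto (fun n => (P n).natDegree) atTop atTop) (a b : ℝ) :
    volume (⋃ M : ℕ, Icc a b ∩ {t : ℝ | ∀ n, ‖(P n).eval (t : ℂ)‖ ≤ M}) ≤ 8 := by
  set B : ℕ → Set ℝ := fun M => Icc a b ∩ {t : ℝ | ∀ n, ‖(P n).eval (t : ℂ)‖ ≤ M}
  have h_mono : Monotone B :=
    fun M M' h t ht => ⟨ht.1, fun n => (ht.2 n).trans (Nat.cast_le.2 h)⟩
  rw [h_mono.measure_iUnion]
  refine iSup_le fun M => ?_
  have h_meas : MeasurableSet (B M) := by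
    refine measurableSet_Icc.inter ?_
    simp only [ofPred_forall]
    exact MeasurableSet.iInter fun n => measurableSet_le (by fun_prop) measurable_const
  have h_fin : volume (B M) ≠ ⊤ :=
    measure_ne_top_of_subset inter_subset_left measure_Icc_lt_top.ne
  rw [← ofReal_measureReal h_fin, ← ENNReal.ofReal_ofNat]
  exact ENNReal.ofReal_le_ofReal <| measureReal_le_eight_of_forall_norm_eval_le hmonic hdeg
    h_meas inter_subset_left fun n t ht => ht.2 n

/-- Let `(P_n)` be a sequence of monic polynomials in `ℂ[X]` whose degrees tend to infinity, and
let `ξ₁, …, ξ_m ∈ ℂ`. Then there exists `ξ ∈ ℂ`, transcendental over `ℚ(ξ₁, …, ξ_m)`, such that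
`(|P_n(ξ)|)_n` is unbounded. -/
theorem stmt_11 (P : ℕ → Polynomial ℂ) (hmonic : ∀ n, (P n).Monic)
    (hdeg : Filter.Tendsto (fun n => (P n).natDegree) Filter.atTop Filter.atTop)
    (m : ℕ) (ξ : Fin m → ℂ) :
    ∃ z : ℂ, Transcendental ↥(IntermediateField.adjoin ℚ (Set.range ξ)) z ∧
      ∀ M : ℝ, ∃ n, M < ‖(P n).eval z‖ := by
  set K := IntermediateField.adjoin ℚ (Set.range ξ)
  have : Countable K := IntermediateField.countable_adjoin ℚ (Set.countable_range ξ)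
  have h_alg : volume (Complex.ofReal ⁻¹' {z | IsAlgebraic K z}) = 0 :=
    ((Algebraic.countable K ℂ).preimage Complex.ofReal_injective).measure_zero volume
  obtain ⟨t, ht, h_good⟩ : ∃ t ∈ Icc (0 : ℝ) 9,
      t ∉ (⋃ M : ℕ, Icc 0 9 ∩ {t : ℝ | ∀ n, ‖(P n).eval (t : ℂ)‖ ≤ M}) ∪
        Complex.ofReal ⁻¹' {z | IsAlgebraic K z} := by
    by_contra! h
    have := (measure_mono (μ := volume) h).trans (measure_union_le _ _)
    rw [h_alg, add_zero, Real.volume_Icc] at this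
    have := this.trans (volume_iUnion_bounded_le_eight hmonic hdeg 0 9)
    norm_num at this
  refine ⟨t, fun h => h_good (Or.inr h), fun M => ?_⟩
  by_contra! h
  exact h_good (Or.inl (mem_iUnion.2 ⟨⌈M⌉₊, ht, fun n => (h n).trans (Nat.le_ceil M)⟩))
end

section
/- Let (P_n)_{n∈ℕ} be a sequence of pairwise distinct polynomials in ℤ[X₁, …, X_m] whose total degrees are uniformly bounded (sup_n deg P_n < ∞). Then there exist complex numbers ξ₁, …, ξ_m, algebraically independent over ℚ, such that the sequence (|P_n(ξ₁, …, ξ_m)|)_n is unbounded in ℝ. -/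
/-!
Both properties hold on a residual subset of `ℂᵐ`, which is nonempty by Baire's theorem. For a
nonzero `q ∈ ℚ[X₁, …, X_m]` the set `{q(ξ) ≠ 0}` is open and dense, since a polynomial vanishing
on an open set is zero. For each `k` the set `{∃ n, k < |P_n(ξ)|}` is open, and it is dense: if
all `|P_n|` were at most `k` on an open set `U`, then, because finitely many points of `U` already
separate polynomials of degree at most `D`, the coefficient vectors of the `P_n` would be bounded.
But they are pairwise distinct integer vectors.
-/

open MvPolynomial Filter Function Set Bornology

section FiniteDimensional

variable {ι 𝕜 E : Type*} [NontriviallyNormedField 𝕜] [CompleteSpace 𝕜] [NormedAddCommGroup E]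
  [NormedSpace 𝕜 E] [FiniteDimensional 𝕜 E]

/-- By Artinianity finitely many `f i` already have no common zero, and the resulting injective
map `E → 𝕜ⁿ` is antilipschitz. -/
theorem isBounded_setOf_forall_norm_apply_le (f : ι → E →ₗ[𝕜] 𝕜)
    (hf : ∀ v, (∀ i, f i v = 0) → v = 0) (M : ℝ) :
    IsBounded {v | ∀ i, ‖f i v‖ ≤ M} := by
  obtain ⟨t, ht⟩ := Finset.exists_inf_le fun i => LinearMap.ker (f i)
  let g : E →ₗ[𝕜] t → 𝕜 := LinearMap.pi fun i => f i
  have hg : LinearMap.ker g = ⊥ := by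
    refine LinearMap.ker_eq_bot'.2 fun v hv => hf v fun i => ht i ?_
    simpa [Finset.mem_inf, g, funext_iff] using hv
  obtain ⟨K, -, hK⟩ := g.exists_antilipschitzWith hg
  refine (hK.isBounded_preimage (Metric.isBounded_closedBall (x := 0) (r := max M 0))).subset
    fun v hv => ?_
  rw [Set.mem_preimage, mem_closedBall_zero_iff, pi_norm_le_iff_of_nonneg (le_max_right M 0)]
  exact fun i => (hv i).trans (le_max_left M 0)

end FiniteDimensional

theorem RCLike.isometry_intCast {𝕜 : Type*} [RCLike 𝕜] : Isometry (Int.cast : ℤ → 𝕜) :=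
  AddMonoidHomClass.isometry_of_norm (Int.castRingHom 𝕜) fun n => by
    rw [eq_intCast, ← RCLike.ofReal_intCast, RCLike.norm_ofReal, Int.norm_eq_abs]

namespace MvPolynomial

section Coeffs

variable {σ R : Type*} [CommSemiring R] (S : Finset (σ →₀ ℕ))

noncomputable def ofCoeffs : (S → R) →ₗ[R] MvPolynomial σ R :=
  Fintype.linearCombination R fun s : S => monomial (s : σ →₀ ℕ) 1

variable {S}

theorem coeff_ofCoeffs (c : S → R) (s : S) : coeff s (ofCoeffs S c) = c s := by
  classical
  simp [ofCoeffs, Fintype.linearCombination_apply, coeff_sum, coeff_monomial]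

theorem ofCoeffs_injective : Injective (ofCoeffs S : (S → R) → MvPolynomial σ R) :=
  fun c d h => _root_.funext fun s => by rw [← coeff_ofCoeffs c, h, coeff_ofCoeffs]

theorem ofCoeffs_coeff {p : MvPolynomial σ R} (hp : p.support ⊆ S) :
    ofCoeffs S (fun s : S => coeff s p) = p := by
  classical
  ext s
  by_cases hs : s ∈ S
  · exact coeff_ofCoeffs _ ⟨s, hs⟩
  · rw [notMem_support_iff.1 fun h => hs (hp h)]
    simp only [ofCoeffs, Fintype.linearCombination_apply, coeff_sum, coeff_smul, coeff_monomial,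
      smul_eq_mul, mul_ite, mul_one, mul_zero]
    exact Finset.sum_eq_zero fun x _ => if_neg fun h : (x : σ →₀ ℕ) = s => hs (h ▸ x.2)

theorem ofCoeffs_intCast_coeff {R : Type*} [CommRing R] {p : MvPolynomial σ ℤ}
    (hp : p.support ⊆ S) :
    ofCoeffs S (fun s : S => ((coeff (s : σ →₀ ℕ) p : ℤ) : R)) = map (Int.castRingHom R) p := by
  rw [← ofCoeffs_coeff ((support_map_subset _ p).trans hp)]
  simp only [coeff_map, eq_intCast]

end Coeffs

section Topology

variable {σ K 𝕜 : Type*} [RCLike 𝕜]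

theorem continuous_aeval [CommSemiring K] [Algebra K 𝕜] (p : MvPolynomial σ K) :
    Continuous fun ξ : σ → 𝕜 => aeval ξ p := by
  simpa only [eval_map, aeval_def] using continuous_eval (map (algebraMap K 𝕜) p)

variable [Fintype σ]

theorem eq_zero_of_forall_eval_eq_zero_of_isOpen {p : MvPolynomial σ 𝕜} {U : Set (σ → 𝕜)}
    (hU : IsOpen U) (hne : U.Nonempty) (hp : ∀ ξ ∈ U, eval ξ p = 0) : p = 0 := by
  obtain ⟨ξ₀, hξ₀⟩ := hne
  have hzero := (AnalyticOnNhd.eval_mvPolynomial p).eqOn_zero_of_preconnected_of_eventuallyEq_zero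
    isPreconnected_univ (mem_univ ξ₀) (Filter.eventually_of_mem (hU.mem_nhds hξ₀) hp)
  exact funext fun ξ => by simpa using hzero (mem_univ ξ)

theorem dense_setOf_aeval_ne_zero [Field K] [Algebra K 𝕜] {p : MvPolynomial σ K} (hp : p ≠ 0) :
    Dense {ξ : σ → 𝕜 | aeval ξ p ≠ 0} := by
  refine dense_iff_inter_open.2 fun U hU hne => ?_
  by_contra! hzero
  refine hp (map_injective _ (algebraMap K 𝕜).injective ?_)
  rw [map_zero]
  refine eq_zero_of_forall_eval_eq_zero_of_isOpen hU hne fun ξ hξ => ?_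
  rw [eval_map, ← aeval_def]
  by_contra h
  exact hzero.subset ⟨hξ, h⟩

variable (K) in
theorem eventually_residual_algebraicIndependent [Field K] [Countable K] [Algebra K 𝕜] :
    ∀ᶠ ξ in residual (σ → 𝕜), AlgebraicIndependent K ξ := by
  have : Countable (MvPolynomial σ K) := (basisMonomials σ K).repr.symm.surjective.countable
  simp_rw [algebraicIndependent_iff]
  refine eventually_countable_forall.2 fun p => ?_
  rcases eq_or_ne p 0 with rfl | hp
  · exact Eventually.of_forall fun _ _ => rfl
  refine mem_of_superset (residual_of_dense_open ?_ (dense_setOf_aeval_ne_zero hp)) ?_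
  · exact isOpen_ne_fun (continuous_aeval p) continuous_const
  · exact fun ξ hξ h => absurd h hξ

theorem isBounded_setOf_forall_norm_eval_ofCoeffs_le (S : Finset (σ →₀ ℕ)) {U : Set (σ → 𝕜)}
    (hU : IsOpen U) (hne : U.Nonempty) (M : ℝ) :
    IsBounded {c : S → 𝕜 | ∀ ξ ∈ U, ‖eval ξ (ofCoeffs S c)‖ ≤ M} := by
  have := isBounded_setOf_forall_norm_apply_le
    (fun ξ : U => (aeval ξ.1).toLinearMap ∘ₗ ofCoeffs S) (fun c hc => ?_) M
  · simpa [aeval_eq_eval] using this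
  · refine ofCoeffs_injective (R := 𝕜) ?_
    rw [map_zero]
    exact eq_zero_of_forall_eval_eq_zero_of_isOpen hU hne fun ξ hξ => by simpa using hc ⟨ξ, hξ⟩

variable {ι : Type*} [Infinite ι] {P : ι → MvPolynomial σ ℤ} {S : Finset (σ →₀ ℕ)}

theorem exists_lt_norm_aeval_of_isOpen (hP : Injective P) (hS : ∀ i, (P i).support ⊆ S)
    {U : Set (σ → 𝕜)} (hU : IsOpen U) (hne : U.Nonempty) (M : ℝ) :
    ∃ ξ ∈ U, ∃ i, M < ‖aeval ξ (P i)‖ := by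
  by_contra! hle
  let z : ι → S → ℤ := fun i s => coeff s (P i)
  have hz : Injective z := fun i j hij => hP <| by
    rw [← ofCoeffs_coeff (hS i), ← ofCoeffs_coeff (hS j)]
    exact congrArg (ofCoeffs S) hij
  have hcast : Isometry fun c : S → ℤ => fun s => (c s : 𝕜) :=
    .piMap _ fun _ => RCLike.isometry_intCast
  have hbdd := hcast.antilipschitz.isBounded_preimage
    (isBounded_setOf_forall_norm_eval_ofCoeffs_le S hU hne M)
  refine (Set.infinite_range_of_injective hz) <|
    ((Metric.finite_isBounded_inter_isClosed IsDiscrete.univ hbdd isClosed_univ).subset ?_)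
  rintro _ ⟨i, rfl⟩
  refine ⟨fun ξ hξ => ?_, mem_univ _⟩
  simpa [z, ofCoeffs_intCast_coeff (hS i), eval_map, aeval_def] using hle ξ hξ i

theorem eventually_residual_forall_exists_lt_norm_aeval (hP : Injective P)
    (hS : ∀ i, (P i).support ⊆ S) :
    ∀ᶠ ξ in residual (σ → 𝕜), ∀ M : ℝ, ∃ i, M < ‖aeval ξ (P i)‖ := by
  have hnat : ∀ᶠ ξ in residual (σ → 𝕜), ∀ k : ℕ, ∃ i, (k : ℝ) < ‖aeval ξ (P i)‖ := by
    refine eventually_countable_forall.2 fun k => residual_of_dense_open ?_ ?_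
    · simp only [ofPred_exists]
      exact isOpen_iUnion fun i => isOpen_lt continuous_const (continuous_aeval (P i)).norm
    · refine dense_iff_inter_open.2 fun U hU hne => ?_
      obtain ⟨ξ, hξ, i, hi⟩ := exists_lt_norm_aeval_of_isOpen hP hS hU hne k
      exact ⟨ξ, hξ, i, hi⟩
  filter_upwards [hnat] with ξ hξ M
  obtain ⟨k, hk⟩ := exists_nat_gt M
  obtain ⟨i, hi⟩ := hξ k
  exact ⟨i, hk.trans hi⟩

end Topology

end MvPolynomial

/-- Let `(P_n)` be a sequence of pairwise distinct polynomials in `ℤ[X₁, …, X_m]` of uniformly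
bounded total degree. Then there exist complex numbers `ξ₁, …, ξ_m`, algebraically independent
over `ℚ`, such that `(|P_n(ξ₁, …, ξ_m)|)_n` is unbounded. -/
theorem stmt_12 (m : ℕ) (P : ℕ → MvPolynomial (Fin m) ℤ)
    (hinj : Function.Injective P)
    (D : ℕ) (hdeg : ∀ n, (P n).totalDegree ≤ D) :
    ∃ ξ : Fin m → ℂ, AlgebraicIndependent ℚ ξ ∧
      ∀ M : ℝ, ∃ n, M < ‖MvPolynomial.aeval ξ (P n)‖ := by
  set S := (Finsupp.finite_of_degree_le (σ := Fin m) D).toFinset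
  have hS : ∀ n, (P n).support ⊆ S := fun n s hs =>
    (Set.Finite.mem_toFinset _).2 ((le_totalDegree hs).trans (hdeg n))
  exact (dense_of_mem_residual ((eventually_residual_algebraicIndependent ℚ).and
    (eventually_residual_forall_exists_lt_norm_aeval hinj hS))).nonempty
end
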